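/- arXiv:1810.00612 — 3 statements merged into one kernel-verified Lean document; each statement's English description precedes it below -/
import Mathlib

section
/- For every positive integer k, the (k-1)-fold iterated Maass raising operator R_{2-2k}^{k-1} (where R_κ = 2i ∂/∂z + κ/y and R_κ^n = R_{κ+2n-2} ∘ ⋯ ∘ R_κ) applied to the constant function 1 on the upper half-plane equals (-1)^{k+1} (k-1)! · binom(2k-2, k-1) · y^{1-k}, where y = Im(z). -/
open Complex

/-- Wirtinger derivative ∂/∂z = (1/2)(∂/∂x - i ∂/∂y). -/
noncomputable def wderivZ (f : ℂ → ℂ) (z : ℂ) : ℂ :=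
  (fderiv ℝ f z 1 - Complex.I * fderiv ℝ f z Complex.I) / 2

/-- Maass raising operator in weight κ: R_κ = 2i ∂/∂z + κ/y. -/
noncomputable def raise (κ : ℤ) (f : ℂ → ℂ) (z : ℂ) : ℂ :=
  2 * Complex.I * wderivZ f z + (κ : ℂ) / (z.im : ℂ) * f z

/-- Iterated raising operator R_κ^n = R_{κ+2n-2} ∘ ⋯ ∘ R_κ. -/
noncomputable def raiseIter (κ : ℤ) : ℕ → (ℂ → ℂ) → (ℂ → ℂ)
  | 0 => fun f => f
  | n + 1 => fun f => raise (κ + 2 * n) (raiseIter κ n f)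

lemma wderivZ_C_ypow (C : ℂ) (m : ℤ) (z : ℂ) (hz : z.im ≠ 0) :
    wderivZ (fun w => C * ((w.im : ℂ)) ^ m) z =
      -Complex.I * (C * m * ((z.im : ℂ)) ^ (m - 1)) / 2 := by
  set L : ℂ →L[ℝ] ℂ := Complex.ofRealCLM.comp Complex.imCLM with hLdef
  have hL : HasFDerivAt (fun w : ℂ => ((w.im : ℂ))) L z := L.hasFDerivAt
  have hzc : ((z.im : ℂ)) ≠ 0 := by
    simpa using hz
  have hp : HasDerivAt (fun w : ℂ => w ^ m) ((m : ℂ) * ((z.im : ℂ)) ^ (m - 1))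
      ((z.im : ℂ)) := hasDerivAt_zpow m _ (Or.inl hzc)
  have h := hp.comp_hasFDerivAt z hL
  have h2 := h.const_mul C
  simp only [Function.comp_def] at h2
  have hfd := h2.fderiv
  unfold wderivZ
  rw [hfd]
  have hL1 : L 1 = 0 := by simp [hLdef]
  have hLI : L Complex.I = 1 := by simp [hLdef]
  simp [ContinuousLinearMap.smul_apply, hL1, hLI, smul_eq_mul]
  ring

lemma raise_ypow (κ : ℤ) (C : ℂ) (m : ℤ) (f : ℂ → ℂ)
    (hf : ∀ w : ℂ, 0 < w.im → f w = C * ((w.im : ℂ)) ^ m) (z : ℂ) (hz : 0 < z.im) :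
    raise κ f z = ((κ : ℂ) + m) * C * ((z.im : ℂ)) ^ (m - 1) := by
  have hzne : z.im ≠ 0 := ne_of_gt hz
  have hzc : ((z.im : ℂ)) ≠ 0 := by simpa using hzne
  have hopen : IsOpen {w : ℂ | 0 < w.im} := isOpen_lt continuous_const Complex.continuous_im
  have heq : f =ᶠ[nhds z] fun w => C * ((w.im : ℂ)) ^ m := by
    filter_upwards [hopen.mem_nhds hz] with w hw using hf w hw
  have hfder : fderiv ℝ f z = fderiv ℝ (fun w => C * ((w.im : ℂ)) ^ m) z := heq.fderiv_eq
  have hw : wderivZ f z = wderivZ (fun w => C * ((w.im : ℂ)) ^ m) z := by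
    unfold wderivZ; rw [hfder]
  unfold raise
  rw [hw, wderivZ_C_ypow C m z hzne, hf z hz]
  have hpow : ((z.im : ℂ)) ^ m = ((z.im : ℂ)) ^ (m - 1) * (z.im : ℂ) := by
    rw [← zpow_add_one₀ hzc]; ring_nf
  rw [hpow]
  field_simp
  ring_nf
  rw [Complex.I_sq]
  ring

lemma raiseIter_const (κ : ℤ) : ∀ n : ℕ, ∀ z : ℂ, 0 < z.im →
    raiseIter κ n (fun _ => 1) z =
      (∏ j ∈ Finset.range n, ((κ : ℂ) + j)) * ((z.im : ℂ)) ^ (-(n : ℤ))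
  | 0 => by intro z hz; simp [raiseIter]
  | n + 1 => by
    intro z hz
    have key := raise_ypow (κ + 2 * n) (∏ j ∈ Finset.range n, ((κ : ℂ) + j)) (-(n : ℤ))
      (raiseIter κ n (fun _ => 1)) (raiseIter_const κ n) z hz
    show raise (κ + 2 * n) (raiseIter κ n (fun _ => 1)) z = _
    rw [key, Finset.prod_range_succ]
    rw [show (-(n : ℤ) - 1 : ℤ) = -(((n+1 : ℕ)) : ℤ) from by push_cast; ring]
    push_cast
    ring

theorem raiseIter_one (k : ℕ) (hk : 1 ≤ k) (z : ℂ) (hz : 0 < z.im) :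
    raiseIter (2 - 2 * (k : ℤ)) (k - 1) (fun _ => 1) z =
      (-1) ^ (k + 1) * (Nat.factorial (k - 1) : ℂ) *
        (Nat.choose (2 * k - 2) (k - 1) : ℂ) * (z.im : ℂ) ^ ((1 : ℤ) - (k : ℤ)) := by
  obtain ⟨n, rfl⟩ := Nat.exists_eq_add_of_le hk
  have hk1 : 1 + n - 1 = n := by omega
  have hk2 : 2 * (1 + n) - 2 = 2 * n := by omega
  have hκ : (2 - 2 * ((1 + n : ℕ) : ℤ)) = -(2 * n : ℤ) := by push_cast; ring
  have hexp : (1 : ℤ) - ((1 + n : ℕ) : ℤ) = -(n : ℤ) := by push_cast; ring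
  rw [hk1, hk2, hκ, hexp, raiseIter_const _ n z hz]
  have hprod : (∏ j ∈ Finset.range n, ((((-(2 * (n : ℤ))) : ℤ) : ℂ) + (j : ℂ))) =
      (-1) ^ n * ((2 * n).descFactorial n : ℂ) :=
    calc (∏ j ∈ Finset.range n, ((((-(2 * (n : ℤ))) : ℤ) : ℂ) + (j : ℂ)))
        = ∏ j ∈ Finset.range n, ((-1 : ℂ) * ((2 * n - j : ℕ) : ℂ)) := by
          refine Finset.prod_congr rfl (fun j hj => ?_)
          have hjn : j ≤ 2 * n := by
            have := Finset.mem_range.mp hj; omega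
          have hcast : ((2 * n - j : ℕ) : ℂ) = 2 * n - j := by
            push_cast [hjn]; ring
          rw [hcast]; push_cast; ring
      _ = (-1) ^ n * ((2 * n).descFactorial n : ℂ) := by
          rw [Finset.prod_mul_distrib, Finset.prod_const, Finset.card_range,
            Nat.descFactorial_eq_prod_range, Nat.cast_prod]
  rw [hprod, Nat.descFactorial_eq_factorial_mul_choose]
  have hsign : ((-1 : ℂ)) ^ (1 + n + 1) = (-1) ^ n := by
    rw [show 1 + n + 1 = n + 2 by ring, pow_add]; norm_num
  rw [hsign]
  push_cast
  ring
end

section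
/- For every positive integer k and every complex z = x + iy in the upper half-plane, the (k-1)-fold iterated raising operator in weight 2-2k applied to the function z ↦ z^{k-1} satisfies R_{2-2k}^{k-1}(z^{k-1}) = (2i)^{k-1} (k-1)! · P_{k-1}(ix/y), where P_{k-1} is the (k-1)-st Legendre polynomial. -/
open Complex Polynomial

/-- The n-th Legendre polynomial, via the Rodrigues formula
`P_n = 1/(2^n n!) dⁿ/dxⁿ (x²-1)ⁿ`. -/
noncomputable def legendre (n : ℕ) : Polynomial ℚ :=
  Polynomial.C (1 / (2 ^ n * n.factorial : ℚ)) *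
    (Polynomial.derivative^[n] ((Polynomial.X ^ 2 - 1) ^ n))

noncomputable def Spoly (n : ℕ) : ℕ → Polynomial ℂ
  | 0 => C (I ^ n) * (1 - X) ^ n
  | m + 1 => C ((m : ℂ) - n) * Spoly n m - (1 + X) * derivative (Spoly n m)

lemma Spoly_eq (n : ℕ) : ∀ m ≤ n, (1 + X) ^ (n - m) * Spoly n m
    = C (I ^ n * (-1) ^ (n + m)) * (derivative^[m] ((X ^ 2 - 1) ^ n) : Polynomial ℂ) := by
  intro m hm
  induction m with
  | zero =>
      have e : ((X : Polynomial ℂ) ^ 2 - 1) ^ n = ((-1) * ((1 - X) * (1 + X))) ^ n := by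
        ring_nf
      simp only [Spoly, Nat.sub_zero, Function.iterate_zero, id_eq, Nat.add_zero, e]
      simp only [map_mul, map_pow, map_neg, map_one, mul_pow]
      rw [show C I ^ n * (-1 : Polynomial ℂ) ^ n * ((-1) ^ n * ((1 - X) ^ n * (1 + X) ^ n))
        = ((-1) * (-1) : Polynomial ℂ) ^ n * (C I ^ n * ((1 - X) ^ n * (1 + X) ^ n)) from by
          rw [mul_pow]; ring]
      norm_num
      ring
  | succ m ih =>
      have hmn : m < n := hm
      have H := ih hmn.le
      have H' := congrArg derivative H
      rw [derivative_mul, derivative_pow, derivative_add, derivative_one, derivative_X,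
        derivative_mul, derivative_C] at H'
      simp only [add_zero, mul_one, zero_mul, zero_add] at H'
      rw [← Function.iterate_succ_apply' derivative m] at H'
      have hcast : ((n - m : ℕ) : ℂ) = (n : ℂ) - m := by
        push_cast [Nat.cast_sub hmn.le]; ring
      have key : (1 + X) ^ (n - (m + 1)) * Spoly n (m + 1)
          = -(C ((n - m : ℕ) : ℂ) * (1 + X) ^ (n - m - 1) * Spoly n m
              + (1 + X) ^ (n - m) * derivative (Spoly n m)) := by
        rw [Spoly, hcast]
        obtain ⟨a, ha⟩ : ∃ a, n - m = a + 1 := ⟨n - (m + 1), by omega⟩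
        have ha2 : n - (m + 1) = a := by omega
        have ha3 : n - m - 1 = a := by omega
        rw [ha3, ha2, ha, pow_succ]
        simp only [map_sub, Nat.add_sub_cancel]
        ring
      rw [key, H', show I ^ n * (-1 : ℂ) ^ (n + (m + 1)) = -(I ^ n * (-1) ^ (n + m)) by ring,
        map_neg, neg_mul]

lemma raise_aux (P : Polynomial ℂ) (a : ℕ) (ha : 1 ≤ a) (c : ℤ) (z : ℂ) (hz : 0 < z.im) :
    raise c (fun w => (w.im : ℂ) ^ a * eval (I * w.re * (w.im : ℂ)⁻¹) P) z
      = (z.im : ℂ) ^ (a - 1) *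
        (((a : ℂ) + (c : ℂ)) * eval (I * z.re * (z.im : ℂ)⁻¹) P
          - (1 + I * z.re * (z.im : ℂ)⁻¹) * eval (I * z.re * (z.im : ℂ)⁻¹) (derivative P)) := by
  have hy : (z.im : ℂ) ≠ 0 := by
    simpa using ne_of_gt hz
  have hre : HasFDerivAt (fun w : ℂ => (w.re : ℂ)) (ofRealCLM.comp reCLM) z :=
    (ofRealCLM.comp reCLM).hasFDerivAt
  have him : HasFDerivAt (fun w : ℂ => (w.im : ℂ)) (ofRealCLM.comp imCLM) z :=
    (ofRealCLM.comp imCLM).hasFDerivAt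
  have h1 : HasFDerivAt (fun w : ℂ => I * (w.re : ℂ)) (I • (ofRealCLM.comp reCLM)) z :=
    hre.const_mul I
  have hinv : HasFDerivAt (fun w : ℂ => ((w.im : ℂ))⁻¹)
      ((-(((z.im : ℂ)) ^ 2)⁻¹) • (ofRealCLM.comp imCLM)) z :=
    (hasDerivAt_inv hy).comp_hasFDerivAt z him
  have h4 : HasFDerivAt (fun w : ℂ => ((w.im : ℂ)) ^ a)
      (((a : ℂ) * ((z.im : ℂ)) ^ (a - 1)) • (ofRealCLM.comp imCLM)) z :=
    (hasDerivAt_pow a ((z.im : ℂ))).comp_hasFDerivAt z him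
  have h3 := h1.mul hinv
  have h5 := (Polynomial.hasDerivAt P (I * (z.re : ℂ) * ((z.im : ℂ))⁻¹)).comp_hasFDerivAt z h3
  have h6 := h4.mul h5
  simp only [Function.comp_def, Pi.mul_def] at h6
  have hf := h6.fderiv
  simp only [raise, wderivZ, hf]
  simp only [ContinuousLinearMap.add_apply, ContinuousLinearMap.smul_apply,
    ContinuousLinearMap.coe_comp', Function.comp_apply, ofRealCLM_apply, reCLM_apply,
    imCLM_apply, smul_eq_mul, Complex.one_re, Complex.one_im, Complex.I_re, Complex.I_im,
    Complex.ofReal_zero, Complex.ofReal_one, mul_zero, mul_one, zero_add, add_zero]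
  have hpow : (z.im : ℂ) ^ a = (z.im : ℂ) ^ (a - 1) * (z.im : ℂ) := by
    rw [← pow_succ]; congr 1; omega
  rw [hpow]
  set u := ((z.im:ℂ))⁻¹ with hu_def
  have hu : (z.im:ℂ) * u = 1 := mul_inv_cancel₀ hy
  have hI : (I:ℂ) * I = -1 := Complex.I_mul_I
  rw [show (((z.im:ℂ))^2)⁻¹ = u^2 from by rw [hu_def, inv_pow]]
  rw [show (c : ℂ) / (z.im:ℂ) = (c:ℂ) * u from by rw [hu_def, div_eq_mul_inv]]
  linear_combination ((z.im:ℂ)^(a-1) * eval (I*(z.re:ℂ)*u) (derivative P) * (I*I)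
      + I*I*I*(z.re:ℂ)*u*((z.im:ℂ))^(a-1)*eval (I*(z.re:ℂ)*u) (derivative P)
      + (c:ℂ)*(z.im:ℂ)^(a-1)*eval (I*(z.re:ℂ)*u) P) * hu
    + ((z.im:ℂ)^(a-1)*eval (I*(z.re:ℂ)*u) (derivative P)
      + I*(z.im:ℂ)^(a-1)*(z.re:ℂ)*u*eval (I*(z.re:ℂ)*u) (derivative P)
      - (a:ℂ)*eval (I*(z.re:ℂ)*u) P*(z.im:ℂ)^(a-1)) * hI

lemma main_aux (n : ℕ) : ∀ m, m ≤ n → ∀ z : ℂ, 0 < z.im →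
    raiseIter (2 - 2 * ((n : ℤ) + 1)) m (fun w => w ^ n) z
      = (z.im : ℂ) ^ (n - m) * eval (I * z.re * (z.im : ℂ)⁻¹) (Spoly n m) := by
  intro m
  induction m with
  | zero =>
      intro _ z hz
      have hy : (z.im : ℂ) ≠ 0 := by simpa using ne_of_gt hz
      have hu : (z.im:ℂ) * (z.im:ℂ)⁻¹ = 1 := mul_inv_cancel₀ hy
      have hI : (I:ℂ) * I = -1 := Complex.I_mul_I
      show z ^ n = _
      rw [Spoly]
      simp only [eval_mul, eval_C, eval_pow, eval_sub, eval_one, eval_X, Nat.sub_zero]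
      have hzz : (z.im:ℂ) * (I * (1 - I * z.re * (z.im:ℂ)⁻¹)) = z := by
        linear_combination Complex.re_add_im z + (-(z.re:ℂ)*(I*I))*hu + (-(z.re:ℂ))*hI
      calc z ^ n = ((z.im:ℂ) * (I * (1 - I * z.re * (z.im:ℂ)⁻¹))) ^ n := by rw [hzz]
        _ = _ := by rw [mul_pow, mul_pow]
  | succ m ih =>
      intro hm z hz
      have hm' : m ≤ n := Nat.le_of_succ_le hm
      have hopen : IsOpen {w : ℂ | 0 < w.im} := isOpen_lt continuous_const Complex.continuous_im
      have hev : raiseIter (2 - 2 * ((n : ℤ) + 1)) m (fun w => w ^ n)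
          =ᶠ[nhds z] fun w => (w.im : ℂ) ^ (n - m) * eval (I * w.re * (w.im : ℂ)⁻¹) (Spoly n m) := by
        filter_upwards [hopen.mem_nhds hz] with w hw using ih hm' w hw
      show raise (2 - 2 * ((n : ℤ) + 1) + 2 * m) (raiseIter (2 - 2 * ((n : ℤ) + 1)) m
        (fun w => w ^ n)) z = _
      have hr : raise (2 - 2 * ((n : ℤ) + 1) + 2 * m) (raiseIter (2 - 2 * ((n : ℤ) + 1)) m
          (fun w => w ^ n)) z
          = raise (2 - 2 * ((n : ℤ) + 1) + 2 * m)
            (fun w => (w.im : ℂ) ^ (n - m) * eval (I * w.re * (w.im : ℂ)⁻¹) (Spoly n m)) z := by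
        unfold raise wderivZ
        rw [hev.fderiv_eq, hev.eq_of_nhds]
      rw [hr, raise_aux (Spoly n m) (n - m) (by omega) _ z hz]
      rw [Spoly]
      have he1 : n - m - 1 = n - (m + 1) := by omega
      have he2 : ((n - m : ℕ) : ℂ) + ((2 - 2 * ((n : ℤ) + 1) + 2 * m : ℤ) : ℂ) = (m : ℂ) - n := by
        push_cast [Nat.cast_sub hm']; ring
      rw [he1, he2]
      simp only [eval_sub, eval_mul, eval_C, eval_add, eval_one, eval_X]

theorem raiseIter_pow (k : ℕ) (hk : 1 ≤ k) (z : ℂ) (hz : 0 < z.im) :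
    raiseIter (2 - 2 * (k : ℤ)) (k - 1) (fun w => w ^ (k - 1)) z =
      (2 * Complex.I) ^ (k - 1) * (Nat.factorial (k - 1) : ℂ) *
        Polynomial.aeval ((Complex.I * (z.re : ℂ)) / (z.im : ℂ)) (legendre (k - 1)) := by
  set n := k - 1 with hn
  have hkn : (k : ℤ) = (n : ℤ) + 1 := by omega
  rw [hkn]
  have h := main_aux n n le_rfl z hz
  rw [h, Nat.sub_self, pow_zero, one_mul]
  have hS := Spoly_eq n n le_rfl
  rw [Nat.sub_self, pow_zero, one_mul] at hS
  have hsign : I ^ n * (-1 : ℂ) ^ (n + n) = I ^ n := by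
    rw [← two_mul, pow_mul]; norm_num
  rw [hS, hsign]
  have ht : I * (z.re : ℂ) / (z.im : ℂ) = I * (z.re : ℂ) * ((z.im : ℂ))⁻¹ := div_eq_mul_inv _ _
  rw [eval_mul, eval_C, legendre, map_mul, aeval_C]
  have hmap : (aeval (I * (z.re:ℂ) / (z.im:ℂ))
        (derivative^[n] ((X ^ 2 - 1) ^ n : Polynomial ℚ)) : ℂ)
      = eval (I * (z.re:ℂ) * ((z.im:ℂ))⁻¹) (derivative^[n] ((X ^ 2 - 1) ^ n : Polynomial ℂ)) := by
    rw [aeval_def, eval₂_eq_eval_map, ← iterate_derivative_map, ht]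
    congr 1
    simp [Polynomial.map_pow]
  rw [hmap]
  have hfac : ((Nat.factorial n : ℚ) : ℂ) ≠ 0 := by
    exact_mod_cast Nat.cast_ne_zero.mpr (Nat.factorial_ne_zero n)
  have halg : (algebraMap ℚ ℂ) (1 / (2 ^ n * (Nat.factorial n : ℚ)))
      = 1 / (2 ^ n * (Nat.factorial n : ℂ)) := by
    push_cast
    simp
  rw [halg]
  have h2 : (2 ^ n * (Nat.factorial n : ℂ)) ≠ 0 := by
    apply mul_ne_zero (by norm_num)
    exact_mod_cast Nat.factorial_ne_zero n
  rw [mul_pow]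
  field_simp
  rw [mul_div_cancel_right₀ _ (by exact_mod_cast Nat.factorial_ne_zero n)]
end

section
/- Let D > 0 be a non-square discriminant and z ∈ ℍ. Then there are only finitely many integral binary quadratic forms Q = [a,b,c] with b² − 4ac = D, a < 0, and Q_z > 0. -/
/-- For D > 0 a non-square discriminant and z ∈ ℍ, there are only finitely many integral
binary quadratic forms [a,b,c] with b² - 4ac = D, a < 0, and Q_z > 0. -/
theorem finiteness_of_forms (D : ℤ) (hD : 0 < D) (hns : ¬∃ n : ℤ, n ^ 2 = D)
    (z : ℂ) (hz : 0 < z.im) :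
    {t : ℤ × ℤ × ℤ | t.2.1 ^ 2 - 4 * t.1 * t.2.2 = D ∧ t.1 < 0 ∧
      0 < ((t.1 : ℝ) * (z.re ^ 2 + z.im ^ 2) + (t.2.1 : ℝ) * z.re + (t.2.2 : ℝ)) / z.im}.Finite := by
  set x := z.re with hx
  set y := z.im with hy'
  have hy : (0:ℝ) < y := hz
  set N : ℤ := ⌈Real.sqrt ((D:ℝ)/(4*y^2))⌉ with hN
  set M : ℤ := ⌈2*(N:ℝ)*|x| + Real.sqrt D⌉ with hM
  set K : ℤ := M^2 + D with hK
  apply Set.Finite.subset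
    ((Set.finite_Icc (-N) N).prod ((Set.finite_Icc (-M) M).prod (Set.finite_Icc (-K) K)))
  rintro ⟨a, b, c⟩ ⟨hdisc, ha, hQ⟩
  simp only at hdisc ha hQ
  have hQ' : (0:ℝ) < (a:ℝ)*(x^2+y^2) + b*x + c := by
    rcases div_pos_iff.mp hQ with ⟨h, _⟩ | ⟨_, h⟩
    · exact h
    · linarith
  have ha' : (a:ℝ) < 0 := by exact_mod_cast ha
  have hdiscR : (b:ℝ)^2 - 4*a*c = D := by exact_mod_cast hdisc
  have key : (2*(a:ℝ)*x + b)^2 + 4*(a:ℝ)^2*y^2 < D := by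
    nlinarith [mul_pos (neg_pos.mpr ha') hQ']
  -- bound on a
  have h2 : (a:ℝ)^2 < (D:ℝ)/(4*y^2) := by
    rw [lt_div_iff₀ (by positivity)]
    nlinarith [sq_nonneg (2*(a:ℝ)*x + b)]
  have h3 : |(a:ℝ)| ≤ (N:ℝ) := by
    have h := Real.sqrt_le_sqrt h2.le
    rw [Real.sqrt_sq_eq_abs] at h
    exact h.trans (Int.le_ceil _)
  have haN : |a| ≤ N := by exact_mod_cast (by push_cast; exact h3 : |(a:ℝ)| ≤ ((N:ℤ):ℝ))
  -- bound on b
  have hbsq : (2*(a:ℝ)*x + b)^2 < D := by nlinarith [sq_nonneg ((a:ℝ)*y)]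
  have hab : |2*(a:ℝ)*x + b| ≤ Real.sqrt D := by
    have h := Real.sqrt_le_sqrt hbsq.le
    rwa [Real.sqrt_sq_eq_abs] at h
  have h4 : |(b:ℝ)| ≤ (M:ℝ) := by
    have h5 : |(b:ℝ)| ≤ |2*(a:ℝ)*x + b| + |2*(a:ℝ)*x| := by
      have := abs_add_le (2*(a:ℝ)*x + b) (-(2*(a:ℝ)*x))
      simpa [abs_neg] using this
    have h6 : |2*(a:ℝ)*x| ≤ 2*(N:ℝ)*|x| := by
      rw [abs_mul, abs_mul]
      have : |(2:ℝ)| = 2 := by norm_num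
      rw [this]
      have hNn : (0:ℝ) ≤ (N:ℝ) := le_trans (abs_nonneg _) h3
      nlinarith [abs_nonneg x, h3]
    calc |(b:ℝ)| ≤ |2*(a:ℝ)*x + b| + |2*(a:ℝ)*x| := h5
      _ ≤ Real.sqrt D + 2*(N:ℝ)*|x| := add_le_add hab h6
      _ = 2*(N:ℝ)*|x| + Real.sqrt D := by ring
      _ ≤ (M:ℝ) := Int.le_ceil _
  have hbM : |b| ≤ M := by exact_mod_cast (by push_cast; exact h4 : |(b:ℝ)| ≤ ((M:ℤ):ℝ))
  -- bound on c
  have ha1 : a ≤ -1 := by omega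
  have hb2 : b^2 ≤ M^2 := sq_le_sq' (by linarith [abs_le.mp hbM]) (abs_le.mp hbM).2
  have hcK : -K ≤ c ∧ c ≤ K := by
    have h4ac : 4*a*c = b^2 - D := by linarith
    constructor
    · nlinarith [sq_nonneg b, sq_nonneg M]
    · nlinarith [sq_nonneg b, sq_nonneg M]
  refine ⟨?_, ?_, ?_⟩ <;> simp only [Set.mem_Icc]
  · exact abs_le.mp haN
  · exact abs_le.mp hbM
  · exact hcK
end
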